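/- arXiv:2005.02953 — 2 statements merged into one kernel-verified Lean document; each statement's English description precedes it below -/
import Mathlib

section
/- Let X and Y be real-valued random variables on a probability space with joint cumulative distribution function H(x,y) = P(X ≤ x and Y ≤ y) and marginal cumulative distribution functions F(x) = P(X ≤ x) and G(y) = P(Y ≤ y). Then there exists a bivariate copula C : [0,1]² → ℝ such that H(x,y) = C(F(x), G(y)) for all real x, y. -/
open MeasureTheory
open scoped ProbabilityTheory

/-- A bivariate copula: a function `C : [0,1]² → ℝ` (here defined on all of `ℝ × ℝ`,
with the copula properties required on `[0,1]²`) satisfying the grounding,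
marginal-uniformity and 2-increasing conditions. -/
def IsBivariateCopula (C : ℝ → ℝ → ℝ) : Prop :=
  (∀ u ∈ Set.Icc (0:ℝ) 1, C u 0 = 0) ∧
  (∀ v ∈ Set.Icc (0:ℝ) 1, C 0 v = 0) ∧
  (∀ u ∈ Set.Icc (0:ℝ) 1, C u 1 = u) ∧
  (∀ v ∈ Set.Icc (0:ℝ) 1, C 1 v = v) ∧
  (∀ a₁ b₁ a₂ b₂ : ℝ, a₁ ∈ Set.Icc (0:ℝ) 1 → b₁ ∈ Set.Icc (0:ℝ) 1 →
    a₂ ∈ Set.Icc (0:ℝ) 1 → b₂ ∈ Set.Icc (0:ℝ) 1 → a₁ ≤ b₁ → a₂ ≤ b₂ →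
    0 ≤ C b₁ b₂ - C a₁ b₂ - C b₁ a₂ + C a₁ a₂)

/-!
Randomize the atoms of the marginals. For a law `ν` on `ℝ` with CDF `F` and a
variable `T` uniform on `(0,1]` independent of `X ∼ ν`, the distributional transform
`U = F(X⁻) + T (F(X) - F(X⁻))` is uniform on `[0,1]`, and `U ≤ F(x) ↔ X ≤ x` almost surely
because `ν` does not charge the intervals on which `F` is flat. Doing this for `X` and `Y`
with one common `T`, the joint CDF `C(u, v) = P(U ≤ u, V ≤ v)` of the pair `(U, V)` is a copula,
and `C(F(x), G(y)) = P(X ≤ x, Y ≤ y)`.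
-/

open ProbabilityTheory Set Filter Function

theorem measure_eq_zero_of_forall_measure_inter_Iic_eq_zero {α : Type*} [LinearOrder α]
    [TopologicalSpace α] [OrderTopology α] [SecondCountableTopology α] [MeasurableSpace α]
    (μ : Measure α) {s : Set α} (h : ∀ z ∈ s, μ (s ∩ Iic z) = 0) : μ s = 0 := by
  refine measure_null_of_locally_null s fun z hz => ?_
  by_cases hmax : ∃ w ∈ s, z < w
  · obtain ⟨w, hw, hzw⟩ := hmax
    exact ⟨s ∩ Iio w, inter_mem_nhdsWithin s (Iio_mem_nhds hzw),
      measure_mono_null (inter_subset_inter_right s Iio_subset_Iic_self) (h w hw)⟩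
  · refine ⟨s, self_mem_nhdsWithin, ?_⟩
    have hs : s ∩ Iic z = s :=
      inter_eq_left.2 fun w hw => mem_Iic.2 (not_lt.1 fun hzw => hmax ⟨w, hw, hzw⟩)
    rw [← h z hz, hs]

theorem eqOn_id_Icc_of_monotone {h : ℝ → ℝ} (hmono : Monotone h) (h₀ : 0 ≤ h 0)
    (h₁ : h 1 ≤ 1) (hid : EqOn h id (Ioo 0 1)) : EqOn h id (Icc 0 1) := by
  intro u ⟨hu₀, hu₁⟩
  rcases hu₀.eq_or_lt with rfl | hu₀
  · refine le_antisymm (le_of_forall_gt_imp_ge_of_dense fun ε hε => ?_) h₀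
    rcases lt_or_ge ε 1 with hε₁ | hε₁
    · exact (hmono hε.le).trans (hid ⟨hε, hε₁⟩).le
    · exact (hmono zero_le_one).trans (h₁.trans hε₁)
  rcases hu₁.eq_or_lt with rfl | hu₁
  · refine le_antisymm h₁ (le_of_forall_lt_imp_le_of_dense fun ε hε => ?_)
    rcases le_or_gt ε 0 with hε₀ | hε₀
    · exact hε₀.trans (h₀.trans (hmono zero_le_one))
    · exact (hid ⟨hε₀, hε⟩).ge.trans (hmono hε.le)
  exact hid ⟨hu₀, hu₁⟩

theorem measureReal_inter_sub_sub_add_nonneg {α : Type*} [MeasurableSpace α] (μ : Measure α)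
    [IsFiniteMeasure μ] {A A' B B' : Set α} (hA' : MeasurableSet A') (hAA' : A' ⊆ A)
    (hBB' : B' ⊆ B) :
    0 ≤ μ.real (A ∩ B) - μ.real (A' ∩ B) - μ.real (A ∩ B') + μ.real (A' ∩ B') := by
  have split (C : Set α) : μ.real (A ∩ C) = μ.real (A' ∩ C) + μ.real ((A \ A') ∩ C) := by
    rw [← measureReal_inter_add_sdiff (s := A ∩ C) hA', inter_right_comm,
      inter_eq_right.2 hAA', inter_sdiff_right_comm]
  have hmono : μ.real ((A \ A') ∩ B') ≤ μ.real ((A \ A') ∩ B) :=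
    measureReal_mono (inter_subset_inter_right _ hBB')
  linarith [split B, split B']

noncomputable def uniformIoc : Measure ℝ := volume.restrict (Ioc 0 1)

instance : IsProbabilityMeasure uniformIoc := ⟨by simp [uniformIoc]⟩

theorem uniformIoc_setOf_add_mul_le_mul {a m u : ℝ} (hm : 0 ≤ m) (hau : a ≤ u)
    (hum : u ≤ a + m) :
    uniformIoc {t | a + t * m ≤ u} * ENNReal.ofReal m = ENNReal.ofReal (u - a) := by
  rcases hm.eq_or_lt with rfl | hm
  · simp [show u = a by linarith]
  have hset : {t | a + t * m ≤ u} = Iic ((u - a) / m) := by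
    ext t
    simp only [mem_ofPred_eq, mem_Iic, le_div_iff₀ hm]
    constructor <;> intro <;> linarith
  rw [hset, uniformIoc, Measure.restrict_apply measurableSet_Iic,
    Iic_inter_Ioc_of_le ((div_le_one hm).2 (by linarith)), Real.volume_Ioc, sub_zero,
    ← ENNReal.ofReal_mul (div_nonneg (by linarith) hm.le), div_mul_cancel₀ _ hm.ne']

noncomputable def distributionalTransform (ν : Measure ℝ) (x t : ℝ) : ℝ :=
  leftLim (cdf ν) x + t * (cdf ν x - leftLim (cdf ν) x)

section DistributionalTransform

variable (ν : Measure ℝ)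

theorem measurable_distributionalTransform :
    Measurable (uncurry (distributionalTransform ν)) := by
  have hL : Measurable (leftLim (cdf ν)) := (monotone_cdf ν).leftLim.measurable
  have hF : Measurable (cdf ν) := (monotone_cdf ν).measurable
  unfold distributionalTransform uncurry
  fun_prop

theorem distributionalTransform_le_cdf {t : ℝ} (ht : t ≤ 1) (x : ℝ) :
    distributionalTransform ν x t ≤ cdf ν x := by
  have := (monotone_cdf ν).leftLim_le le_rfl (x := x)
  unfold distributionalTransform
  nlinarith

theorem cdf_le_of_distributionalTransform_le_cdf {x z t : ℝ} (ht : 0 < t) (hxz : x < z)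
    (h : distributionalTransform ν z t ≤ cdf ν x) : cdf ν z ≤ cdf ν x := by
  have h₁ := (monotone_cdf ν).le_leftLim hxz
  have h₂ := (monotone_cdf ν).leftLim_le le_rfl (x := z)
  have h₃ : 0 ≤ t * (cdf ν z - leftLim (cdf ν) z) := mul_nonneg ht.le (sub_nonneg.2 h₂)
  unfold distributionalTransform at h
  nlinarith

theorem exists_le_cdf_and_forall_lt_cdf_lt {u : ℝ} (hu : u ∈ Ioo 0 1) :
    ∃ q, u ≤ cdf ν q ∧ ∀ x < q, cdf ν x < u := by
  set S := {x | u ≤ cdf ν x}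
  have hne : S.Nonempty :=
    (((tendsto_cdf_atTop ν).eventually (lt_mem_nhds hu.2)).exists).imp fun _ => le_of_lt
  have hbdd : BddBelow S := by
    obtain ⟨a, ha⟩ := eventually_atBot.1 ((tendsto_cdf_atBot ν).eventually (gt_mem_nhds hu.1))
    exact ⟨a, fun x hx => le_of_not_gt fun hxa => (ha x hxa.le).not_ge hx⟩
  refine ⟨sInf S, ?_, fun x hx => not_le.1 fun h => hx.not_ge (csInf_le hbdd h)⟩
  refine ge_of_tendsto (((cdf ν).right_continuous _).mono Ioi_subset_Ici_self)
    (eventually_nhdsWithin_of_forall fun x hx => ?_)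
  obtain ⟨s, hs, hsx⟩ := (csInf_lt_iff hbdd hne).1 hx
  exact hs.trans (monotone_cdf ν hsx.le)

variable [IsProbabilityMeasure ν]

theorem ae_cdf_lt_of_lt (x : ℝ) : ∀ᵐ z ∂ν, x < z → cdf ν x < cdf ν z := by
  refine ae_iff.2 (measure_eq_zero_of_forall_measure_inter_Iic_eq_zero ν fun z hz => ?_)
  simp only [Classical.not_imp, not_lt] at hz ⊢
  refine measure_mono_null (t := Ioc x z) (fun w ⟨hw, hwz⟩ => ⟨hw.1, hwz⟩) ?_
  rw [← measure_cdf ν, StieltjesFunction.measure_Ioc, ENNReal.ofReal_eq_zero, sub_nonpos]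
  exact hz.2

theorem ae_distributionalTransform_le_cdf_iff (x : ℝ) :
    ∀ᵐ p ∂(ν.prod uniformIoc),
      distributionalTransform ν p.1 p.2 ≤ cdf ν x ↔ p.1 ≤ x := by
  have hunif : ∀ᵐ t ∂uniformIoc, t ∈ Ioc 0 1 := ae_restrict_mem measurableSet_Ioc
  filter_upwards [Measure.quasiMeasurePreserving_fst.ae (ae_cdf_lt_of_lt ν x),
    Measure.quasiMeasurePreserving_snd.ae hunif] with ⟨z, t⟩ hz ⟨ht₀, ht₁⟩
  refine ⟨fun h => not_lt.1 fun hxz =>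
      (hz hxz).not_ge (cdf_le_of_distributionalTransform_le_cdf ν ht₀ hxz h),
    fun h => (distributionalTransform_le_cdf ν ht₁ z).trans (monotone_cdf ν h)⟩

theorem prod_setOf_distributionalTransform_le {u : ℝ} (hu : u ∈ Ioo 0 1) :
    (ν.prod uniformIoc) {p | distributionalTransform ν p.1 p.2 ≤ u} = ENNReal.ofReal u := by
  -- Slice at the `u`-quantile `q`: the section over `x` is all of `(0,1]` for `x < q`,
  -- has length `(u - F(q⁻)) / ν{q}` at `q`, and is null for a.e. `x > q`.
  obtain ⟨q, hq, hlt⟩ := exists_le_cdf_and_forall_lt_cdf_lt ν hu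
  have hL₀ : 0 ≤ leftLim (cdf ν) q :=
    (cdf_nonneg ν _).trans ((monotone_cdf ν).le_leftLim (sub_one_lt q))
  have hL : leftLim (cdf ν) q ≤ u :=
    le_of_tendsto ((monotone_cdf ν).tendsto_leftLim q)
      (eventually_nhdsWithin_of_forall fun x hx => (hlt x hx).le)
  set g : ℝ → ENNReal := fun x => uniformIoc {t | distributionalTransform ν x t ≤ u}
  have hg_lt : EqOn g 1 (Iio q) := fun x hx => by
    refine le_antisymm prob_le_one ?_
    calc 1 = uniformIoc (Ioc 0 1) := by simp [uniformIoc]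
      _ ≤ g x := measure_mono fun t ht =>
        (distributionalTransform_le_cdf ν ht.2 x).trans (hlt x hx).le
  have hg_q : g q * ν {q} = ENNReal.ofReal (u - leftLim (cdf ν) q) := by
    have hmass : ν {q} = ENNReal.ofReal (cdf ν q - leftLim (cdf ν) q) := by
      simpa only [measure_cdf] using (cdf ν).measure_singleton q
    rw [hmass]
    exact uniformIoc_setOf_add_mul_le_mul (sub_nonneg.2 ((monotone_cdf ν).leftLim_le le_rfl)) hL
      (by linarith)
  have hg_gt : ∀ᵐ x ∂ν, x ∈ Ioi q → g x = 0 := by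
    filter_upwards [ae_cdf_lt_of_lt ν q] with x hx hqx
    have hnull : uniformIoc (Ioc 0 1)ᶜ = 0 := ae_restrict_mem measurableSet_Ioc
    refine measure_mono_null (t := (Ioc 0 1)ᶜ) (fun t ht ht01 => ?_) hnull
    exact (hx hqx).not_ge (cdf_le_of_distributionalTransform_le_cdf ν ht01.1 hqx (ht.trans hq))
  have hS : MeasurableSet {p : ℝ × ℝ | distributionalTransform ν p.1 p.2 ≤ u} :=
    measurableSet_le (measurable_distributionalTransform ν) measurable_const
  have hIio : ν (Iio q) = ENNReal.ofReal (leftLim (cdf ν) q) := by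
    simpa only [measure_cdf, sub_zero] using (cdf ν).measure_Iio (tendsto_cdf_atBot ν) q
  rw [Measure.prod_apply hS]
  change ∫⁻ x, g x ∂ν = _
  rw [← lintegral_add_compl g measurableSet_Iic, compl_Iic, ← Iio_union_right,
    lintegral_union (measurableSet_singleton q) (by simp),
    setLIntegral_congr_fun measurableSet_Iio hg_lt, lintegral_singleton, hg_q,
    setLIntegral_congr_fun_ae measurableSet_Ioi hg_gt]
  simp only [Pi.one_apply, setLIntegral_one, lintegral_zero, add_zero]
  rw [hIio, ← ENNReal.ofReal_add hL₀ (sub_nonneg.2 hL), add_sub_cancel]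

theorem measureReal_prod_setOf_distributionalTransform_le {u : ℝ} (hu : u ∈ Icc 0 1) :
    (ν.prod uniformIoc).real {p | distributionalTransform ν p.1 p.2 ≤ u} = u := by
  refine eqOn_id_Icc_of_monotone
    (h := fun u => (ν.prod uniformIoc).real {p | distributionalTransform ν p.1 p.2 ≤ u})
    (fun a b hab => measureReal_mono fun p hp => hp.trans hab)
    measureReal_nonneg measureReal_le_one (fun u hu => ?_) hu
  simp only [measureReal_def, prod_setOf_distributionalTransform_le ν hu,
    ENNReal.toReal_ofReal hu.1.le, id]

end DistributionalTransform

theorem exists_uniform_ae_le_cdf_iff {Ω : Type*} [MeasurableSpace Ω] (P : Measure Ω)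
    [IsProbabilityMeasure P] {X : Ω → ℝ} (hX : Measurable X) :
    ∃ U : Ω × ℝ → ℝ, Measurable U ∧
      (∀ u ∈ Icc (0 : ℝ) 1, (P.prod uniformIoc).real {p | U p ≤ u} = u) ∧
      ∀ x, ∀ᵐ p ∂(P.prod uniformIoc), U p ≤ cdf (P.map X) x ↔ X p.1 ≤ x := by
  have : IsProbabilityMeasure (P.map X) := Measure.isProbabilityMeasure_map hX.aemeasurable
  have hφ : Measurable (Prod.map X (id : ℝ → ℝ)) := hX.prodMap measurable_id
  have hmap :
      (P.prod uniformIoc).map (Prod.map X (id : ℝ → ℝ)) = (P.map X).prod uniformIoc := by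
    rw [← Measure.map_prod_map P uniformIoc hX measurable_id, Measure.map_id]
  refine ⟨uncurry (distributionalTransform (P.map X)) ∘ Prod.map X (id : ℝ → ℝ),
    (measurable_distributionalTransform _).comp hφ, fun u hu => ?_, fun x => ?_⟩
  · have hS : MeasurableSet {p : ℝ × ℝ | distributionalTransform (P.map X) p.1 p.2 ≤ u} :=
      measurableSet_le (measurable_distributionalTransform _) measurable_const
    have := measureReal_prod_setOf_distributionalTransform_le (P.map X) hu
    rw [← hmap, map_measureReal_apply hφ hS] at this
    exact this
  · exact ae_of_ae_map hφ.aemeasurable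
      (hmap ▸ ae_distributionalTransform_le_cdf_iff (P.map X) x)

theorem isBivariateCopula_measureReal_le {α : Type*} [MeasurableSpace α] (P : Measure α)
    [IsProbabilityMeasure P] {U V : α → ℝ} (hU : Measurable U) (hV : Measurable V)
    (hU_unif : ∀ u ∈ Icc (0 : ℝ) 1, P.real {a | U a ≤ u} = u)
    (hV_unif : ∀ v ∈ Icc (0 : ℝ) 1, P.real {a | V a ≤ v} = v) :
    IsBivariateCopula fun u v => P.real {a | U a ≤ u ∧ V a ≤ v} := by
  have hnull {W : α → ℝ} (hW : ∀ w ∈ Icc (0 : ℝ) 1, P.real {a | W a ≤ w} = w) :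
      P {a | W a ≤ 0} = 0 :=
    (measureReal_eq_zero_iff (measure_ne_top P _)).1 (hW 0 (left_mem_Icc.2 zero_le_one))
  have hconull {W : α → ℝ} (hW_meas : Measurable W)
      (hW : ∀ w ∈ Icc (0 : ℝ) 1, P.real {a | W a ≤ w} = w) : P {a | W a ≤ 1}ᶜ = 0 := by
    rw [← measureReal_eq_zero_iff, measureReal_compl (measurableSet_le hW_meas measurable_const),
      hW 1 (right_mem_Icc.2 zero_le_one), probReal_univ, sub_self]
  refine ⟨fun u _ => ?_, fun v _ => ?_, fun u hu => ?_, fun v hv => ?_,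
    fun a₁ b₁ a₂ b₂ _ _ _ _ h₁ h₂ => ?_⟩
  · exact (measureReal_eq_zero_iff (measure_ne_top P _)).2
      (measure_mono_null (fun a ha => ha.2) (hnull hV_unif))
  · exact (measureReal_eq_zero_iff (measure_ne_top P _)).2
      (measure_mono_null (fun a ha => ha.1) (hnull hU_unif))
  · change P.real ({a | U a ≤ u} ∩ {a | V a ≤ 1}) = u
    rw [measureReal_def, measure_inter_conull (hconull hV hV_unif), ← measureReal_def,
      hU_unif u hu]
  · change P.real ({a | U a ≤ 1} ∩ {a | V a ≤ v}) = v
    rw [inter_comm, measureReal_def, measure_inter_conull (hconull hU hU_unif),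
      ← measureReal_def, hV_unif v hv]
  · exact measureReal_inter_sub_sub_add_nonneg P (A := {a | U a ≤ b₁})
      (B := {a | V a ≤ b₂}) (measurableSet_le hU measurable_const)
      (fun a ha => le_trans ha h₁) (fun a ha => le_trans ha h₂)

/-- **Sklar's theorem (bivariate case).** For real random variables `X, Y` with joint CDF
`H(x,y) = P(X ≤ x ∧ Y ≤ y)` and marginals `F(x) = P(X ≤ x)`, `G(y) = P(Y ≤ y)`,
there is a bivariate copula `C` with `H(x,y) = C(F(x), G(y))` for all `x, y`. -/
theorem sklar_bivariate {Ω : Type*} [MeasureSpace Ω]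
    [IsProbabilityMeasure (ℙ : Measure Ω)]
    (X Y : Ω → ℝ) (hX : Measurable X) (hY : Measurable Y) :
    ∃ C : ℝ → ℝ → ℝ, IsBivariateCopula C ∧
      ∀ x y : ℝ,
        (ℙ {ω | X ω ≤ x ∧ Y ω ≤ y}).toReal =
          C ((ℙ {ω | X ω ≤ x}).toReal) ((ℙ {ω | Y ω ≤ y}).toReal) := by
  obtain ⟨U, hU, hU_unif, hUX⟩ := exists_uniform_ae_le_cdf_iff ℙ hX
  obtain ⟨V, hV, hV_unif, hVY⟩ := exists_uniform_ae_le_cdf_iff ℙ hY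
  refine ⟨_, isBivariateCopula_measureReal_le _ hU hV hU_unif hV_unif, fun x y => ?_⟩
  have hcdf {Z : Ω → ℝ} (hZ : Measurable Z) (z : ℝ) :
      (ℙ {ω | Z ω ≤ z}).toReal = cdf (Measure.map Z ℙ) z := by
    have := Measure.isProbabilityMeasure_map (μ := ℙ) hZ.aemeasurable
    rw [cdf_eq_real, map_measureReal_apply hZ measurableSet_Iic]
    rfl
  have hXY : ∀ᵐ p ∂Measure.prod ℙ uniformIoc,
      p ∈ {ω | X ω ≤ x ∧ Y ω ≤ y} ×ˢ univ ↔
        U p ≤ cdf (Measure.map X ℙ) x ∧ V p ≤ cdf (Measure.map Y ℙ) y := by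
    filter_upwards [hUX x, hVY y] with p hpU hpV
    simpa only [mem_prod, mem_univ, and_true, mem_ofPred_eq] using (and_congr hpU hpV).symm
  rw [hcdf hX, hcdf hY]
  calc (ℙ {ω | X ω ≤ x ∧ Y ω ≤ y}).toReal
      = (Measure.prod ℙ uniformIoc).real ({ω | X ω ≤ x ∧ Y ω ≤ y} ×ˢ univ) := by
        rw [measureReal_prod_prod, probReal_univ, mul_one]
        rfl
    _ = _ := measureReal_congr (eventuallyEq_set.2 hXY)
end

section
/- Let Z₁ and Z₃ be independent standard Gaussian random variables, ρ ∈ [−1,1], and set Z₂ = ρ·Z₁ + √(1−ρ²)·Z₃. Let S_f(0) > 0, Q(0) > 0, σ₁ ≥ 0, σ₂ ≥ 0, T > 0 and r, r_f, μ ∈ ℝ. Define S_f(T) = S_f(0)·e^{(μ − σ₁²/2)T + σ₁√T·Z₁} and Q(T) = Q(0)·e^{(r − r_f − σ₂²/2)T + σ₂√T·Z₂}. Then E[ Q(T)·S_f(T) ] = Q(0)·S_f(0)·e^{rT} if and only if μ·T = ( r − ( r − r_f + ρσ₁σ₂ ) )·T; in particular, if T > 0 this holds if and only if μ = r − ( r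 − r_f + ρσ₁σ₂ ). -/
open MeasureTheory ProbabilityTheory
open scoped ProbabilityTheory
open Real NNReal

/-!
Writing `Z₂ = ρZ₁ + √(1−ρ²)Z₃`, the log of `Q(T)·S_f(T)` is a constant plus `aZ₁ + bZ₃` with
`a = (σ₁ + ρσ₂)√T` and `b = σ₂√(1−ρ²)√T`. By independence and the Gaussian moment generating
function, `E[e^{aZ₁ + bZ₃}] = e^{(a² + b²)/2} = e^{(σ₁² + 2ρσ₁σ₂ + σ₂²)T/2}`; the Itô corrections
`−σ₁²T/2` and `−σ₂²T/2` cancel the squares and leave the cross term `ρσ₁σ₂T`, so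
`E[Q(T)·S_f(T)] = Q(0)·S_f(0)·e^{(μ + r − r_f + ρσ₁σ₂)T}`.
-/

namespace ProbabilityTheory

variable {Ω : Type*} {mΩ : MeasurableSpace Ω} {P : Measure Ω}

lemma integral_exp_add_of_indepFun_gaussianReal {X Y : Ω → ℝ} {m₁ m₂ : ℝ} {v₁ v₂ : ℝ≥0}
    (hXY : IndepFun X Y P) (hX : P.map X = gaussianReal m₁ v₁)
    (hY : P.map Y = gaussianReal m₂ v₂) (a b : ℝ) :
    ∫ ω, exp (a * X ω + b * Y ω) ∂P
      = exp (m₁ * a + v₁ * a ^ 2 / 2 + (m₂ * b + v₂ * b ^ 2 / 2)) := by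
  have hXm : AEMeasurable X P := .of_map_ne_zero (by simp [hX, NeZero.ne])
  have hYm : AEMeasurable Y P := .of_map_ne_zero (by simp [hY, NeZero.ne])
  calc ∫ ω, exp (a * X ω + b * Y ω) ∂P = ∫ ω, exp (a * X ω) * exp (b * Y ω) ∂P := by
        simp_rw [exp_add]
    _ = mgf X P a * mgf Y P b :=
        (hXY.exp_mul a b).integral_mul_eq_mul_integral (by fun_prop (disch := assumption))
          (by fun_prop (disch := assumption))
    _ = _ := by rw [mgf_gaussianReal hX, mgf_gaussianReal hY, ← exp_add]

lemma integral_quanto_product {Z₁ Z₃ : Ω → ℝ}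
    (hZ₁ : P.map Z₁ = gaussianReal 0 1) (hZ₃ : P.map Z₃ = gaussianReal 0 1)
    (hindep : IndepFun Z₁ Z₃ P) {ρ T : ℝ} (hρ : ρ ^ 2 ≤ 1) (hT : 0 ≤ T)
    (Sf0 Q0 σ₁ σ₂ r rf μ : ℝ) :
    ∫ ω, Q0 * exp ((r - rf - σ₂ ^ 2 / 2) * T + σ₂ * √T * (ρ * Z₁ ω + √(1 - ρ ^ 2) * Z₃ ω))
        * (Sf0 * exp ((μ - σ₁ ^ 2 / 2) * T + σ₁ * √T * Z₁ ω)) ∂P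
      = Q0 * Sf0 * exp ((μ + (r - rf) + ρ * σ₁ * σ₂) * T) := by
  set a := (σ₁ + ρ * σ₂) * √T
  set b := σ₂ * √(1 - ρ ^ 2) * √T
  set C := (r - rf - σ₂ ^ 2 / 2) * T + (μ - σ₁ ^ 2 / 2) * T
  have hintegrand : ∀ ω,
      Q0 * exp ((r - rf - σ₂ ^ 2 / 2) * T + σ₂ * √T * (ρ * Z₁ ω + √(1 - ρ ^ 2) * Z₃ ω))
        * (Sf0 * exp ((μ - σ₁ ^ 2 / 2) * T + σ₁ * √T * Z₁ ω))
      = Q0 * Sf0 * exp C * exp (a * Z₁ ω + b * Z₃ ω) := by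
    intro ω
    rw [mul_mul_mul_comm, ← exp_add, mul_assoc (Q0 * Sf0), ← exp_add]
    congr 2
    simp only [a, b, C]
    ring
  have hexponent : C + (a ^ 2 / 2 + b ^ 2 / 2) = (μ + (r - rf) + ρ * σ₁ * σ₂) * T := by
    simp only [a, b, C, mul_pow, sq_sqrt hT, sq_sqrt (sub_nonneg.2 hρ)]
    ring
  simp_rw [hintegrand]
  rw [integral_const_mul, integral_exp_add_of_indepFun_gaussianReal hindep hZ₁ hZ₃,
    mul_assoc, ← exp_add, ← hexponent]
  simp

end ProbabilityTheory

theorem quanto_drift_iff_general {Ω : Type*} [MeasureSpace Ω]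
    (Z₁ Z₃ : Ω → ℝ)
    (hZ₁ : Measure.map Z₁ (ℙ : Measure Ω) = gaussianReal 0 1)
    (hZ₃ : Measure.map Z₃ (ℙ : Measure Ω) = gaussianReal 0 1)
    (hindep : IndepFun Z₁ Z₃ (ℙ : Measure Ω))
    (ρ : ℝ) (hρ : ρ ∈ Set.Icc (-1 : ℝ) 1)
    (Z₂ : Ω → ℝ) (hZ₂ : Z₂ = fun ω => ρ * Z₁ ω + Real.sqrt (1 - ρ ^ 2) * Z₃ ω)
    (Sf0 Q0 σ₁ σ₂ T r rf μ : ℝ)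
    (hSf0 : 0 < Sf0) (hQ0 : 0 < Q0) (hT : 0 < T)
    (SfT QT : Ω → ℝ)
    (hSfT : SfT = fun ω => Sf0 * Real.exp ((μ - σ₁ ^ 2 / 2) * T + σ₁ * Real.sqrt T * Z₁ ω))
    (hQT : QT = fun ω => Q0 * Real.exp ((r - rf - σ₂ ^ 2 / 2) * T + σ₂ * Real.sqrt T * Z₂ ω)) :
    ((∫ ω, QT ω * SfT ω ∂(ℙ : Measure Ω)) = Q0 * Sf0 * Real.exp (r * T) ↔
        μ * T = (r - (r - rf + ρ * σ₁ * σ₂)) * T) ∧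
      ((∫ ω, QT ω * SfT ω ∂(ℙ : Measure Ω)) = Q0 * Sf0 * Real.exp (r * T) ↔
        μ = r - (r - rf + ρ * σ₁ * σ₂)) := by
  have hρ2 : ρ ^ 2 ≤ 1 := sq_le_one_iff_abs_le_one ρ |>.2 (abs_le.2 hρ)
  subst hZ₂ hSfT hQT
  rw [integral_quanto_product hZ₁ hZ₃ hindep hρ2 hT.le, mul_right_inj' (mul_pos hQ0 hSf0).ne',
    exp_eq_exp]
  have hdrift : (μ + (r - rf) + ρ * σ₁ * σ₂) * T = r * T ↔
      μ * T = (r - (r - rf + ρ * σ₁ * σ₂)) * T := by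
    constructor <;> intro h <;> linarith
  exact ⟨hdrift, hdrift.trans (mul_left_inj' hT.ne')⟩

/-- **Quanto drift.** With `Z₂ = ρZ₁ + √(1−ρ²)Z₃` built from independent standard
Gaussians `Z₁, Z₃`, lognormal `S_f(T)` with drift `μ` and lognormal exchange rate
`Q(T)` with drift `r − r_f`, the martingale condition
`E[Q(T)·S_f(T)] = Q(0)·S_f(0)·e^{rT}` holds iff `μT = (r − (r − r_f + ρσ₁σ₂))T`;
in particular (as `T > 0`) iff `μ = r − (r − r_f + ρσ₁σ₂)`. -/
theorem quanto_drift_iff {Ω : Type*} [MeasureSpace Ω]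
    [IsProbabilityMeasure (ℙ : Measure Ω)]
    (Z₁ Z₃ : Ω → ℝ) (hZ₁m : Measurable Z₁) (hZ₃m : Measurable Z₃)
    (hZ₁ : Measure.map Z₁ (ℙ : Measure Ω) = gaussianReal 0 1)
    (hZ₃ : Measure.map Z₃ (ℙ : Measure Ω) = gaussianReal 0 1)
    (hindep : IndepFun Z₁ Z₃ (ℙ : Measure Ω))
    (ρ : ℝ) (hρ : ρ ∈ Set.Icc (-1 : ℝ) 1)
    (Z₂ : Ω → ℝ) (hZ₂ : Z₂ = fun ω => ρ * Z₁ ω + Real.sqrt (1 - ρ ^ 2) * Z₃ ω)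
    (Sf0 Q0 σ₁ σ₂ T r rf μ : ℝ)
    (hSf0 : 0 < Sf0) (hQ0 : 0 < Q0) (hσ₁ : 0 ≤ σ₁) (hσ₂ : 0 ≤ σ₂) (hT : 0 < T)
    (SfT QT : Ω → ℝ)
    (hSfT : SfT = fun ω => Sf0 * Real.exp ((μ - σ₁ ^ 2 / 2) * T + σ₁ * Real.sqrt T * Z₁ ω))
    (hQT : QT = fun ω => Q0 * Real.exp ((r - rf - σ₂ ^ 2 / 2) * T + σ₂ * Real.sqrt T * Z₂ ω)) :
    ((∫ ω, QT ω * SfT ω ∂(ℙ : Measure Ω)) = Q0 * Sf0 * Real.exp (r * T) ↔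
        μ * T = (r - (r - rf + ρ * σ₁ * σ₂)) * T) ∧
      ((∫ ω, QT ω * SfT ω ∂(ℙ : Measure Ω)) = Q0 * Sf0 * Real.exp (r * T) ↔
        μ = r - (r - rf + ρ * σ₁ * σ₂)) :=
  quanto_drift_iff_general Z₁ Z₃ hZ₁ hZ₃ hindep ρ hρ Z₂ hZ₂ Sf0 Q0 σ₁ σ₂ T r rf μ hSf0 hQ0 hT SfT QT
    hSfT hQT
end
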